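/- Let M ∈ ℝ^{m×n} with s < min(m,n) be partitioned in blocks A_M, B_M, F_M, C_M, and let M_lg be its best rank-s approximation with conformal blocks A_lg, B_lg, F_lg, C_lg. If A_M and A_lg are nonsingular, then ‖F_M·A_M^{-1}·B_M − C_lg‖₂ ≤ (σ_{s+1}(M)/σ_s(A_M)) · ( σ₁(M)²/σ_s(A_lg) + 2σ₁(M) + σ_{s+1}(M) ). -/

import Mathlib

/-!
`M_lg = U_s Σ_s V_sᵀ` has rank `s` and a nonsingular block `A_lg`, so the Nyström extension is
exact on it: `C_lg = F_lg A_lg⁻¹ B_lg`. Write every block of `M` as its `M_lg` block plus its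
`M_sm` block and use `A_lg⁻¹ - A_M⁻¹ = A_M⁻¹ A_sm A_lg⁻¹`; then `F_M A_M⁻¹ B_M - F_lg A_lg⁻¹ B_lg`
is a sum of four triple products, each containing an `M_sm` block. Blocks of `M_sm` have norm at
most `σ_{s+1}(M)`, blocks of `M_lg` at most `σ₁(M)`, and `‖A⁻¹‖₂ ≤ 1/σ_s(A)` for nonsingular `A`,
by the Rayleigh bounds `σ_q(A)² ‖x‖² ≤ ‖A x‖² ≤ σ₁(A)² ‖x‖²`.
-/

open Matrix

/-- `sv A k` is the `k`-th largest singular value (1-indexed) of the real matrix `A`,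
computed as the `k`-th largest square root of an eigenvalue of `Aᵀ * A`. -/
noncomputable def sv {p q : ℕ} (A : Matrix (Fin p) (Fin q) ℝ) (k : ℕ) : ℝ :=
  if h : q - k < q then
    (fun i : Fin q => Real.sqrt ((Matrix.isHermitian_conjTranspose_mul_self A).eigenvalues i))
      (Tuple.sort (fun i : Fin q =>
        Real.sqrt ((Matrix.isHermitian_conjTranspose_mul_self A).eigenvalues i)) ⟨q - k, h⟩)
  else 0

open scoped Matrix.Norms.L2Operator

section L2OpNorm

variable {l m n o : Type*} [Fintype m] [Fintype n]

theorem norm_toLp_sq (v : n → ℝ) : ‖WithLp.toLp 2 v‖ ^ 2 = v ⬝ᵥ v := by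
  rw [← real_inner_self_eq_norm_sq, EuclideanSpace.inner_eq_star_dotProduct]
  rfl

theorem dotProduct_mulVec_self_eq (A : Matrix m n ℝ) (x : n → ℝ) :
    (A *ᵥ x) ⬝ᵥ (A *ᵥ x) = x ⬝ᵥ ((Aᴴ * A) *ᵥ x) := by
  rw [conjTranspose_eq_transpose_of_trivial, ← mulVec_mulVec, mulVec_transpose, dotProduct_comm x,
    ← dotProduct_mulVec]

variable [DecidableEq n]

theorem dotProduct_mulVec_self_le (A : Matrix m n ℝ) (x : n → ℝ) :
    (A *ᵥ x) ⬝ᵥ (A *ᵥ x) ≤ ‖A‖ ^ 2 * (x ⬝ᵥ x) := by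
  rw [← norm_toLp_sq, ← norm_toLp_sq, ← mul_pow]
  exact pow_le_pow_left₀ (norm_nonneg _) (l2_opNorm_mulVec A (WithLp.toLp 2 x)) 2

theorem l2_opNorm_le_of_dotProduct_mulVec_self_le (A : Matrix m n ℝ) {c : ℝ} (hc : 0 ≤ c)
    (h : ∀ x, (A *ᵥ x) ⬝ᵥ (A *ᵥ x) ≤ c ^ 2 * (x ⬝ᵥ x)) : ‖A‖ ≤ c := by
  rw [l2_opNorm_def]
  refine ContinuousLinearMap.opNorm_le_bound _ hc fun x => ?_
  have hx := h x.ofLp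
  rw [← norm_toLp_sq, ← norm_toLp_sq, ← mul_pow] at hx
  exact (pow_le_pow_iff_left₀ (norm_nonneg _) (by positivity) two_ne_zero).mp hx

theorem l2_opNorm_le_one_of_transpose_mul_self (W : Matrix m n ℝ) (hW : Wᵀ * W = 1) :
    ‖W‖ ≤ 1 :=
  l2_opNorm_le_of_dotProduct_mulVec_self_le W zero_le_one fun x => by
    rw [dotProduct_mulVec_self_eq, conjTranspose_eq_transpose_of_trivial, hW, one_mulVec,
      one_pow, one_mul]

theorem l2_opNorm_one_submatrix_id_le_one [Fintype o] [DecidableEq o] {e : o → n}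
    (he : Function.Injective e) : ‖(1 : Matrix n n ℝ).submatrix id e‖ ≤ 1 := by
  refine l2_opNorm_le_one_of_transpose_mul_self _ ?_
  rw [transpose_submatrix, transpose_one, ← submatrix_mul _ _ _ _ _ Function.bijective_id,
    Matrix.one_mul, submatrix_one e he]

variable [DecidableEq m]

theorem l2_opNorm_transpose (A : Matrix m n ℝ) : ‖Aᵀ‖ = ‖A‖ := by
  rw [← conjTranspose_eq_transpose_of_trivial, l2_opNorm_conjTranspose]

theorem l2_opNorm_mul_mul_le [Fintype l] [Fintype o] [DecidableEq o] (X : Matrix l m ℝ)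
    (Y : Matrix m n ℝ) (Z : Matrix n o ℝ) : ‖X * Y * Z‖ ≤ ‖X‖ * ‖Y‖ * ‖Z‖ :=
  (l2_opNorm_mul _ _).trans (mul_le_mul_of_nonneg_right (l2_opNorm_mul _ _) (norm_nonneg _))

theorem l2_opNorm_submatrix_le [Fintype l] [DecidableEq l] [Fintype o] [DecidableEq o]
    (X : Matrix m n ℝ) {r : l → m} {c : o → n} (hr : Function.Injective r)
    (hc : Function.Injective c) :
    ‖X.submatrix r c‖ ≤ ‖X‖ := by
  have hsplit : X.submatrix r c =
      ((1 : Matrix m m ℝ).submatrix id r)ᵀ * X * (1 : Matrix n n ℝ).submatrix id c := by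
    ext i j
    simp [mul_apply, one_apply]
  calc ‖X.submatrix r c‖
      ≤ ‖((1 : Matrix m m ℝ).submatrix id r)ᵀ‖ * ‖X‖ * ‖(1 : Matrix n n ℝ).submatrix id c‖ := by
        rw [hsplit]
        exact l2_opNorm_mul_mul_le _ _ _
    _ ≤ 1 * ‖X‖ * 1 := by
        rw [l2_opNorm_transpose]
        gcongr
        · exact l2_opNorm_one_submatrix_id_le_one hr
        · exact l2_opNorm_one_submatrix_id_le_one hc
    _ = ‖X‖ := by ring

end L2OpNorm

namespace Matrix.IsHermitian

variable {n : Type*} [Fintype n] [DecidableEq n] {B : Matrix n n ℝ}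

-- `y` is the coordinate vector of `x` in an orthonormal eigenbasis of `B`.
theorem exists_dotProduct_mulVec_eq_sum (hB : B.IsHermitian) (x : n → ℝ) :
    ∃ y : n → ℝ, y ⬝ᵥ y = x ⬝ᵥ x ∧ x ⬝ᵥ (B *ᵥ x) = ∑ i, hB.eigenvalues i * y i ^ 2 := by
  set W : Matrix n n ℝ := ↑hB.eigenvectorUnitary
  have hW : W * Wᵀ = 1 := by
    rw [← conjTranspose_eq_transpose_of_trivial]
    exact mem_unitaryGroup_iff.mp hB.eigenvectorUnitary.2
  have hB' : B = W * diagonal hB.eigenvalues * Wᵀ := by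
    conv_lhs => rw [hB.spectral_theorem]
    rfl
  refine ⟨Wᵀ *ᵥ x, ?_, ?_⟩
  · rw [dotProduct_mulVec, vecMul_transpose, mulVec_mulVec, hW, one_mulVec]
  · calc x ⬝ᵥ (B *ᵥ x) = (Wᵀ *ᵥ x) ⬝ᵥ (diagonal hB.eigenvalues *ᵥ (Wᵀ *ᵥ x)) := by
          conv_lhs => rw [hB']
          rw [Matrix.mul_assoc, ← mulVec_mulVec, dotProduct_mulVec, ← mulVec_transpose,
            ← mulVec_mulVec]
      _ = ∑ i, hB.eigenvalues i * (Wᵀ *ᵥ x) i ^ 2 := by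
          simp only [mulVec_diagonal, dotProduct, sq]
          exact Finset.sum_congr rfl fun i _ => by ring

theorem dotProduct_mulVec_le (hB : B.IsHermitian) {c : ℝ} (hc : ∀ i, hB.eigenvalues i ≤ c)
    (x : n → ℝ) : x ⬝ᵥ (B *ᵥ x) ≤ c * (x ⬝ᵥ x) := by
  obtain ⟨y, hy, hBx⟩ := hB.exists_dotProduct_mulVec_eq_sum x
  rw [hBx, ← hy, dotProduct, Finset.mul_sum]
  exact Finset.sum_le_sum fun i _ => by nlinarith [hc i, sq_nonneg (y i)]

theorem le_dotProduct_mulVec (hB : B.IsHermitian) {c : ℝ} (hc : ∀ i, c ≤ hB.eigenvalues i)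
    (x : n → ℝ) : c * (x ⬝ᵥ x) ≤ x ⬝ᵥ (B *ᵥ x) := by
  obtain ⟨y, hy, hBx⟩ := hB.exists_dotProduct_mulVec_eq_sum x
  rw [hBx, ← hy, dotProduct, Finset.mul_sum]
  exact Finset.sum_le_sum fun i _ => by nlinarith [hc i, sq_nonneg (y i)]

end Matrix.IsHermitian

section SingularValues

variable {p q : ℕ} (A : Matrix (Fin p) (Fin q) ℝ)

noncomputable def unsortedSv (i : Fin q) : ℝ :=
  √((isHermitian_conjTranspose_mul_self A).eigenvalues i)

theorem unsortedSv_sq (i : Fin q) :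
    unsortedSv A i ^ 2 = (isHermitian_conjTranspose_mul_self A).eigenvalues i :=
  Real.sq_sqrt (eigenvalues_conjTranspose_mul_self_nonneg A i)

theorem sv_eq_unsortedSv {k : ℕ} (hk : 1 ≤ k) (hq : 1 ≤ q) :
    sv A k = unsortedSv A (Tuple.sort (unsortedSv A) ⟨q - k, by omega⟩) := by
  rw [sv, dif_pos (by omega)]
  rfl

theorem sv_nonneg (k : ℕ) : 0 ≤ sv A k := by
  unfold sv
  split
  · exact Real.sqrt_nonneg _
  · exact le_rfl

theorem sv_antitone {k k' : ℕ} (hk : 1 ≤ k) (hkk' : k ≤ k') : sv A k' ≤ sv A k := by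
  rcases Nat.eq_zero_or_pos q with rfl | hq
  · simp [sv]
  rw [sv_eq_unsortedSv A hk hq, sv_eq_unsortedSv A (hk.trans hkk') hq]
  exact Tuple.monotone_sort (unsortedSv A) (Fin.mk_le_mk.mpr (by omega))

theorem unsortedSv_le_sv_one (i : Fin q) : unsortedSv A i ≤ sv A 1 := by
  have hq : 1 ≤ q := i.pos
  rw [sv_eq_unsortedSv A le_rfl hq]
  obtain ⟨j, rfl⟩ := (Tuple.sort (unsortedSv A)).surjective i
  exact Tuple.monotone_sort (unsortedSv A) (Fin.mk_le_mk.mpr (by omega) : j ≤ ⟨q - 1, by omega⟩)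

theorem sv_le_unsortedSv (i : Fin q) : sv A q ≤ unsortedSv A i := by
  rw [sv_eq_unsortedSv A i.pos i.pos]
  obtain ⟨j, rfl⟩ := (Tuple.sort (unsortedSv A)).surjective i
  exact Tuple.monotone_sort (unsortedSv A) (Fin.mk_le_mk.mpr (by omega) : ⟨q - q, _⟩ ≤ j)

theorem dotProduct_mulVec_self_le_sv_one_sq (x : Fin q → ℝ) :
    (A *ᵥ x) ⬝ᵥ (A *ᵥ x) ≤ sv A 1 ^ 2 * (x ⬝ᵥ x) := by
  rw [dotProduct_mulVec_self_eq]
  refine (isHermitian_conjTranspose_mul_self A).dotProduct_mulVec_le (fun i => ?_) x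
  rw [← unsortedSv_sq]
  exact pow_le_pow_left₀ (Real.sqrt_nonneg _) (unsortedSv_le_sv_one A i) 2

theorem sv_sq_mul_le_dotProduct_mulVec_self (x : Fin q → ℝ) :
    sv A q ^ 2 * (x ⬝ᵥ x) ≤ (A *ᵥ x) ⬝ᵥ (A *ᵥ x) := by
  rw [dotProduct_mulVec_self_eq]
  refine (isHermitian_conjTranspose_mul_self A).le_dotProduct_mulVec (fun i => ?_) x
  rw [← unsortedSv_sq]
  exact pow_le_pow_left₀ (sv_nonneg A q) (sv_le_unsortedSv A i) 2

theorem sv_one_le_l2_opNorm : sv A 1 ≤ ‖A‖ := by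
  rcases Nat.eq_zero_or_pos q with rfl | hq
  · simp [sv]
  set hB := isHermitian_conjTranspose_mul_self A
  obtain ⟨i, hi⟩ : ∃ i, unsortedSv A i = sv A 1 := ⟨_, (sv_eq_unsortedSv A le_rfl hq).symm⟩
  set b : Fin q → ℝ := (hB.eigenvectorBasis i).ofLp
  have hb : b ⬝ᵥ b = 1 := by
    rw [← norm_toLp_sq]
    simp [b]
  have hsq : sv A 1 ^ 2 ≤ ‖A‖ ^ 2 := calc
    sv A 1 ^ 2 = b ⬝ᵥ ((Aᴴ * A) *ᵥ b) := by
      rw [hB.mulVec_eigenvectorBasis, dotProduct_smul, hb, ← hi, unsortedSv_sq, smul_eq_mul,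
        mul_one]
    _ = (A *ᵥ b) ⬝ᵥ (A *ᵥ b) := (dotProduct_mulVec_self_eq A b).symm
    _ ≤ ‖A‖ ^ 2 * (b ⬝ᵥ b) := dotProduct_mulVec_self_le A b
    _ = ‖A‖ ^ 2 := by rw [hb, mul_one]
  exact (pow_le_pow_iff_left₀ (sv_nonneg A 1) (norm_nonneg A) two_ne_zero).mp hsq

theorem sv_one_eq_l2_opNorm : sv A 1 = ‖A‖ :=
  le_antisymm (sv_one_le_l2_opNorm A) <|
    l2_opNorm_le_of_dotProduct_mulVec_self_le A (sv_nonneg A 1)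
      (dotProduct_mulVec_self_le_sv_one_sq A)

end SingularValues

section Square

variable {s : ℕ} {A : Matrix (Fin s) (Fin s) ℝ}

theorem sv_pos_of_isUnit_det (hs : 1 ≤ s) (hA : IsUnit A.det) : 0 < sv A s := by
  have hpos : (Aᴴ * A).PosDef :=
    .conjTranspose_mul_self A (mulVec_injective_of_isUnit ((isUnit_iff_isUnit_det A).mpr hA))
  rw [sv_eq_unsortedSv A hs hs, unsortedSv]
  exact Real.sqrt_pos.mpr (hpos.eigenvalues_pos _)

theorem l2_opNorm_inv_le_inv_sv (hA : IsUnit A.det) : ‖A⁻¹‖ ≤ (sv A s)⁻¹ := by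
  rcases Nat.eq_zero_or_pos s with rfl | hs
  · rw [norm_of_subsingleton]
    exact inv_nonneg.mpr (sv_nonneg A 0)
  have hσ := sv_pos_of_isUnit_det hs hA
  refine l2_opNorm_le_of_dotProduct_mulVec_self_le _ (inv_nonneg.mpr hσ.le) fun y => ?_
  have hy := sv_sq_mul_le_dotProduct_mulVec_self A (A⁻¹ *ᵥ y)
  rw [mulVec_mulVec, mul_nonsing_inv A hA, one_mulVec] at hy
  rw [inv_pow, ← div_eq_inv_mul, le_div_iff₀ (by positivity)]
  linarith

end Square

section RectDiagonal

def rectDiagonal {α : Type*} [Zero α] {p q : ℕ} (f : ℕ → α) : Matrix (Fin p) (Fin q) α :=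
  of fun i j => if (i : ℕ) = j then f i else 0

variable {p q : ℕ}

theorem rectDiagonal_eq_submatrix_diagonal {α : Type*} [Zero α] (f : ℕ → α) :
    (rectDiagonal f : Matrix (Fin p) (Fin q) α) =
      (diagonal fun k : Fin (p + q) => f k).submatrix (Fin.castLE (Nat.le_add_right p q))
        (Fin.castLE (Nat.le_add_left q p)) := by
  ext i j
  simp [rectDiagonal, diagonal_apply, Fin.ext_iff]

theorem rectDiagonal_sub {α : Type*} [AddGroup α] (f g : ℕ → α) :
    (rectDiagonal f - rectDiagonal g : Matrix (Fin p) (Fin q) α) = rectDiagonal (f - g) := by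
  ext i j
  by_cases h : (i : ℕ) = j <;> simp [rectDiagonal, h]

theorem l2_opNorm_rectDiagonal_le {f : ℕ → ℝ} {c : ℝ} (hf : ∀ k, |f k| ≤ c) :
    ‖(rectDiagonal f : Matrix (Fin p) (Fin q) ℝ)‖ ≤ c := by
  rw [rectDiagonal_eq_submatrix_diagonal]
  refine (l2_opNorm_submatrix_le _ (Fin.castLE_injective _) (Fin.castLE_injective _)).trans ?_
  rw [l2_opNorm_diagonal, pi_norm_le_iff_of_nonneg ((abs_nonneg _).trans (hf 0))]
  exact fun k => hf k

theorem l2_opNorm_mul_rectDiagonal_mul_transpose_le {m n : Type*} [Fintype m] [DecidableEq m]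
    [Fintype n] [DecidableEq n] {U : Matrix m (Fin p) ℝ} {V : Matrix n (Fin q) ℝ}
    (hU : Uᵀ * U = 1) (hV : Vᵀ * V = 1) {f : ℕ → ℝ} {c : ℝ} (hf : ∀ k, |f k| ≤ c) :
    ‖U * (rectDiagonal f : Matrix (Fin p) (Fin q) ℝ) * Vᵀ‖ ≤ c := calc
  _ ≤ ‖U‖ * ‖(rectDiagonal f : Matrix (Fin p) (Fin q) ℝ)‖ * ‖Vᵀ‖ :=
    l2_opNorm_mul_mul_le _ _ _
  _ ≤ 1 * c * 1 := by
    have hc : 0 ≤ c := (abs_nonneg _).trans (hf 0)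
    rw [l2_opNorm_transpose]
    gcongr
    · exact l2_opNorm_le_one_of_transpose_mul_self U hU
    · exact l2_opNorm_rectDiagonal_le hf
    · exact l2_opNorm_le_one_of_transpose_mul_self V hV
  _ = c := by ring

theorem l2_opNorm_mul_rectDiagonal_indicator_mul_transpose_le {m n : Type*} [Fintype m]
    [DecidableEq m] [Fintype n] [DecidableEq n] {U : Matrix m (Fin p) ℝ} {V : Matrix n (Fin q) ℝ}
    (hU : Uᵀ * U = 1) (hV : Vᵀ * V = 1) {S : Set ℕ} {f : ℕ → ℝ} {c : ℝ} (hc : 0 ≤ c)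
    (hf : ∀ k ∈ S, |f k| ≤ c) :
    ‖U * (rectDiagonal (S.indicator f) : Matrix (Fin p) (Fin q) ℝ) * Vᵀ‖ ≤ c := by
  refine l2_opNorm_mul_rectDiagonal_mul_transpose_le hU hV fun k => ?_
  by_cases hk : k ∈ S
  · simpa [hk] using hf k hk
  · simpa [hk] using hc

end RectDiagonal

theorem Fin.castAdd_ne_natAdd {s n : ℕ} (a : Fin s) (b : Fin n) :
    Fin.castAdd n a ≠ Fin.natAdd s b := by
  simp [Fin.ext_iff]
  omega

theorem mul_one_submatrix_id {α l n o : Type*} [NonAssocSemiring α] [Fintype n] [DecidableEq n]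
    (X : Matrix l n α) (e : o → n) : X * (1 : Matrix n n α).submatrix id e = X.submatrix id e := by
  ext i j
  simp [mul_apply, one_apply]

section TruncatedSVD

variable {α : Type*} {s m n : ℕ}

theorem rectDiagonal_indicator_Iio [Zero α] {p q : ℕ} (f : ℕ → α) :
    (rectDiagonal ((Set.Iio s).indicator f) : Matrix (Fin p) (Fin q) α) =
      of fun (i : Fin p) (j : Fin q) => if (i : ℕ) = j ∧ (i : ℕ) < s then f i else 0 := by
  ext i j
  simp [rectDiagonal, ite_and, Set.indicator_apply]

theorem rectDiagonal_indicator_Iio_eq_mul [Semiring α] (f : ℕ → α) :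
    (rectDiagonal ((Set.Iio s).indicator f) : Matrix (Fin (s + m)) (Fin (s + n)) α) =
      (1 : Matrix (Fin (s + m)) (Fin (s + m)) α).submatrix id (Fin.castAdd m) *
        diagonal (fun k : Fin s => f k) *
        ((1 : Matrix (Fin (s + n)) (Fin (s + n)) α).submatrix id (Fin.castAdd n))ᵀ := by
  ext i j
  induction i using Fin.addCases with
  | left a =>
    induction j using Fin.addCases with
    | left b =>
      by_cases hab : a = b <;>
        simp [rectDiagonal, Set.indicator_apply, mul_apply, one_apply, Fin.val_inj, hab]
    | right b =>
      simp only [rectDiagonal, of_apply, Fin.val_castAdd, Fin.val_natAdd]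
      simp [mul_apply, one_apply, Fin.castAdd_ne_natAdd]
      omega
  | right a =>
    simp [rectDiagonal, Set.indicator_apply, mul_apply, one_apply,
      (Fin.castAdd_ne_natAdd _ _).symm]

theorem mul_rectDiagonal_indicator_Iio_mul_transpose [CommSemiring α] {l o : Type*} [Fintype l]
    [Fintype o] (U : Matrix l (Fin (s + m)) α) (V : Matrix o (Fin (s + n)) α) (f : ℕ → α) :
    U * (rectDiagonal ((Set.Iio s).indicator f) : Matrix (Fin (s + m)) (Fin (s + n)) α) * Vᵀ =
      U.submatrix id (Fin.castAdd m) *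
        (diagonal (fun k : Fin s => f k) * (V.submatrix id (Fin.castAdd n))ᵀ) := by
  rw [rectDiagonal_indicator_Iio_eq_mul, ← mul_one_submatrix_id U, ← mul_one_submatrix_id V,
    transpose_mul]
  simp only [Matrix.mul_assoc]

end TruncatedSVD

section Nystrom

variable {α M N k m n : Type*}

-- With `r₁, c₁` selecting the block `A`, this is `F A⁻¹ B`, the Nyström approximation of the
-- block `X.submatrix r₂ c₂`.
noncomputable def nystrom [CommRing α] [Fintype k] [DecidableEq k] (X : Matrix M N α)
    (r₁ : k → M) (c₁ : k → N) (r₂ : m → M) (c₂ : n → N) : Matrix m n α :=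
  X.submatrix r₂ c₁ * (X.submatrix r₁ c₁)⁻¹ * X.submatrix r₁ c₂

theorem nystrom_eq_submatrix_of_eq_mul [CommRing α] [Fintype k] [DecidableEq k]
    {X : Matrix M N α} {L : Matrix M k α} {R : Matrix k N α} (hX : X = L * R) {r₁ : k → M}
    {c₁ : k → N} (r₂ : m → M) (c₂ : n → N) (hA : IsUnit (X.submatrix r₁ c₁).det) :
    nystrom X r₁ c₁ r₂ c₂ = X.submatrix r₂ c₂ := by
  subst hX
  simp only [nystrom, submatrix_mul _ _ _ _ _ Function.bijective_id] at hA ⊢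
  rw [det_mul] at hA
  rw [Matrix.mul_inv_rev]
  simp only [Matrix.mul_assoc]
  rw [mul_nonsing_inv_cancel_left _ _ (isUnit_of_mul_isUnit_right hA),
    nonsing_inv_mul_cancel_left _ _ (isUnit_of_mul_isUnit_left hA)]

variable [Fintype m] [Fintype n] [DecidableEq n] [Fintype k] [DecidableEq k]

theorem l2_opNorm_mul_inv_mul_sub_le {F F' : Matrix m k ℝ} {A A' : Matrix k k ℝ}
    {B B' : Matrix k n ℝ} (hA : IsUnit A.det) (hA' : IsUnit A'.det) {ε ρ α γ : ℝ}
    (hF : ‖F - F'‖ ≤ ε) (hAA' : ‖A - A'‖ ≤ ε) (hB : ‖B - B'‖ ≤ ε) (hF' : ‖F'‖ ≤ ρ)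
    (hB' : ‖B'‖ ≤ ρ) (hAinv : ‖A⁻¹‖ ≤ α) (hA'inv : ‖A'⁻¹‖ ≤ γ) :
    ‖F * A⁻¹ * B - F' * A'⁻¹ * B'‖ ≤ ε * α * (ρ ^ 2 * γ + 2 * ρ + ε) := by
  have hinv : A'⁻¹ - A⁻¹ = A⁻¹ * (A - A') * A'⁻¹ := by
    rw [Matrix.mul_sub, nonsing_inv_mul _ hA, Matrix.sub_mul, Matrix.one_mul, Matrix.mul_assoc,
      mul_nonsing_inv _ hA', Matrix.mul_one]
  have hsplit : F * A⁻¹ * B - F' * A'⁻¹ * B' =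
      (F - F') * A⁻¹ * (B - B') + F' * A⁻¹ * (B - B') + (F - F') * A⁻¹ * B' -
        F' * (A⁻¹ * (A - A') * A'⁻¹) * B' := by
    rw [← hinv]
    simp only [Matrix.sub_mul, Matrix.mul_sub]
    abel
  have hε : 0 ≤ ε := (norm_nonneg _).trans hF
  have hρ : 0 ≤ ρ := (norm_nonneg _).trans hF'
  have hα : 0 ≤ α := (norm_nonneg _).trans hAinv
  have hγ : 0 ≤ γ := (norm_nonneg _).trans hA'inv
  have hmid : ‖A⁻¹ * (A - A') * A'⁻¹‖ ≤ α * ε * γ :=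
    (l2_opNorm_mul_mul_le _ _ _).trans (by gcongr)
  rw [hsplit]
  calc _ ≤ ‖(F - F') * A⁻¹ * (B - B')‖ + ‖F' * A⁻¹ * (B - B')‖ + ‖(F - F') * A⁻¹ * B'‖ +
        ‖F' * (A⁻¹ * (A - A') * A'⁻¹) * B'‖ :=
      norm_sub_le_of_le (norm_add₃_le) le_rfl
    _ ≤ ε * α * ε + ρ * α * ε + ε * α * ρ + ρ * (α * ε * γ) * ρ := by
      gcongr <;> exact (l2_opNorm_mul_mul_le _ _ _).trans (by gcongr)
    _ = ε * α * (ρ ^ 2 * γ + 2 * ρ + ε) := by ring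

theorem l2_opNorm_nystrom_sub_nystrom_le [DecidableEq m] [Fintype M] [DecidableEq M] [Fintype N]
    [DecidableEq N]    {X X' : Matrix M N ℝ} {r₁ : k → M} {c₁ : k → N} {r₂ : m → M} {c₂ : n → N}
    (hr₁ : Function.Injective r₁) (hc₁ : Function.Injective c₁) (hr₂ : Function.Injective r₂)
    (hc₂ : Function.Injective c₂) (hA : IsUnit (X.submatrix r₁ c₁).det)
    (hA' : IsUnit (X'.submatrix r₁ c₁).det) {ε ρ α γ : ℝ} (hε : ‖X - X'‖ ≤ ε) (hρ : ‖X'‖ ≤ ρ)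
    (hα : ‖(X.submatrix r₁ c₁)⁻¹‖ ≤ α) (hγ : ‖(X'.submatrix r₁ c₁)⁻¹‖ ≤ γ) :
    ‖nystrom X r₁ c₁ r₂ c₂ - nystrom X' r₁ c₁ r₂ c₂‖ ≤ ε * α * (ρ ^ 2 * γ + 2 * ρ + ε) :=
  l2_opNorm_mul_inv_mul_sub_le hA hA' ((l2_opNorm_submatrix_le (X - X') hr₂ hc₁).trans hε)
    ((l2_opNorm_submatrix_le (X - X') hr₁ hc₁).trans hε)
    ((l2_opNorm_submatrix_le (X - X') hr₁ hc₂).trans hε)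
    ((l2_opNorm_submatrix_le X' hr₂ hc₁).trans hρ) ((l2_opNorm_submatrix_le X' hr₁ hc₂).trans hρ)
    hα hγ

end Nystrom

theorem stmt8_general (m n s : ℕ)
    (M : Matrix (Fin (s + m)) (Fin (s + n)) ℝ)
    (AM : Matrix (Fin s) (Fin s) ℝ)
    (hAMdef : AM = M.submatrix (Fin.castAdd m) (Fin.castAdd n))
    (BM : Matrix (Fin s) (Fin n) ℝ)
    (hBMdef : BM = M.submatrix (Fin.castAdd m) (Fin.natAdd s))
    (FM : Matrix (Fin m) (Fin s) ℝ)
    (hFMdef : FM = M.submatrix (Fin.natAdd s) (Fin.castAdd n))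
    -- the (full) SVD of M:
    (U : Matrix (Fin (s + m)) (Fin (s + m)) ℝ) (hU : Uᵀ * U = 1)
    (V : Matrix (Fin (s + n)) (Fin (s + n)) ℝ) (hV : Vᵀ * V = 1)
    (hSVD : M = U * (Matrix.of fun (i : Fin (s + m)) (j : Fin (s + n)) =>
      if (i : ℕ) = (j : ℕ) then sv M ((i : ℕ) + 1) else 0) * Vᵀ)
    -- the best rank-s approximation of M, by truncating its SVD:
    (Mlg : Matrix (Fin (s + m)) (Fin (s + n)) ℝ)
    (hMlg : Mlg = U * (Matrix.of fun (i : Fin (s + m)) (j : Fin (s + n)) =>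
      if (i : ℕ) = (j : ℕ) ∧ (i : ℕ) < s then sv M ((i : ℕ) + 1) else 0) * Vᵀ)
    (Alg : Matrix (Fin s) (Fin s) ℝ)
    (hAlg : Alg = Mlg.submatrix (Fin.castAdd m) (Fin.castAdd n))
    (Clg : Matrix (Fin m) (Fin n) ℝ)
    (hClg : Clg = Mlg.submatrix (Fin.natAdd s) (Fin.natAdd s))
    (hAM : IsUnit AM.det) (hAlgUnit : IsUnit Alg.det) :
    sv (FM * AM⁻¹ * BM - Clg) 1 ≤
      (sv M (s + 1) / sv AM s) *
        ((sv M 1) ^ 2 / sv Alg s + 2 * sv M 1 + sv M (s + 1)) := by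
  subst hAMdef hBMdef hFMdef hAlg hClg
  have hM : M = U * (rectDiagonal fun k => sv M (k + 1) :
      Matrix (Fin (s + m)) (Fin (s + n)) ℝ) * Vᵀ := hSVD
  rw [← rectDiagonal_indicator_Iio (fun k => sv M (k + 1))] at hMlg
  have hsm : ‖M - Mlg‖ ≤ sv M (s + 1) := by
    nth_rw 1 [hM]
    rw [hMlg, ← Matrix.sub_mul, ← Matrix.mul_sub, rectDiagonal_sub, ← Set.indicator_compl]
    refine l2_opNorm_mul_rectDiagonal_indicator_mul_transpose_le hU hV (sv_nonneg M _)
      fun k hk => ?_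
    rw [abs_of_nonneg (sv_nonneg M _)]
    exact sv_antitone M (by omega) (by simpa using hk)
  have hlg : ‖Mlg‖ ≤ sv M 1 := by
    rw [hMlg]
    refine l2_opNorm_mul_rectDiagonal_indicator_mul_transpose_le hU hV (sv_nonneg M 1)
      fun k _ => ?_
    rw [abs_of_nonneg (sv_nonneg M _)]
    exact sv_antitone M le_rfl (by omega)
  rw [sv_one_eq_l2_opNorm, ← nystrom_eq_submatrix_of_eq_mul
    (hMlg.trans (mul_rectDiagonal_indicator_Iio_mul_transpose U V _)) (Fin.natAdd s)
    (Fin.natAdd s) hAlgUnit]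
  calc _ ≤ sv M (s + 1) * (sv _ s)⁻¹ * (sv M 1 ^ 2 * (sv _ s)⁻¹ + 2 * sv M 1 + sv M (s + 1)) :=
        l2_opNorm_nystrom_sub_nystrom_le (Fin.castAdd_injective _ _) (Fin.castAdd_injective _ _)
          (Fin.natAdd_injective _ _) (Fin.natAdd_injective _ _) hAM hAlgUnit hsm hlg
          (l2_opNorm_inv_le_inv_sv hAM) (l2_opNorm_inv_le_inv_sv hAlgUnit)
    _ = _ := by ring

/-- Lemma `span_approx_error`: if `A_M` and `A_lg` are
nonsingular, then the Nyström approximation error satisfies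
`‖F_M A_M⁻¹ B_M − C_lg‖₂ ≤ (σ_{s+1}(M)/σ_s(A_M)) · (σ₁(M)²/σ_s(A_lg) + 2σ₁(M) + σ_{s+1}(M))`,
where `M_lg = U Σ_s Vᵀ` is the best rank-`s` (truncated SVD) approximation of `M`
with blocks `A_lg, B_lg, F_lg, C_lg` conformal with those of `M`. -/
theorem stmt8 (m n s : ℕ) (hs : 1 ≤ s) (hm : 1 ≤ m) (hn : 1 ≤ n)
    (M : Matrix (Fin (s + m)) (Fin (s + n)) ℝ)
    (AM : Matrix (Fin s) (Fin s) ℝ)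
    (hAMdef : AM = M.submatrix (Fin.castAdd m) (Fin.castAdd n))
    (BM : Matrix (Fin s) (Fin n) ℝ)
    (hBMdef : BM = M.submatrix (Fin.castAdd m) (Fin.natAdd s))
    (FM : Matrix (Fin m) (Fin s) ℝ)
    (hFMdef : FM = M.submatrix (Fin.natAdd s) (Fin.castAdd n))
    -- the (full) SVD of M:
    (U : Matrix (Fin (s + m)) (Fin (s + m)) ℝ) (hU : Uᵀ * U = 1)
    (V : Matrix (Fin (s + n)) (Fin (s + n)) ℝ) (hV : Vᵀ * V = 1)
    (hSVD : M = U * (Matrix.of fun (i : Fin (s + m)) (j : Fin (s + n)) =>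
      if (i : ℕ) = (j : ℕ) then sv M ((i : ℕ) + 1) else 0) * Vᵀ)
    -- the best rank-s approximation of M, by truncating its SVD:
    (Mlg : Matrix (Fin (s + m)) (Fin (s + n)) ℝ)
    (hMlg : Mlg = U * (Matrix.of fun (i : Fin (s + m)) (j : Fin (s + n)) =>
      if (i : ℕ) = (j : ℕ) ∧ (i : ℕ) < s then sv M ((i : ℕ) + 1) else 0) * Vᵀ)
    (Alg : Matrix (Fin s) (Fin s) ℝ)
    (hAlg : Alg = Mlg.submatrix (Fin.castAdd m) (Fin.castAdd n))
    (Clg : Matrix (Fin m) (Fin n) ℝ)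
    (hClg : Clg = Mlg.submatrix (Fin.natAdd s) (Fin.natAdd s))
    (hAM : IsUnit AM.det) (hAlgUnit : IsUnit Alg.det) :
    sv (FM * AM⁻¹ * BM - Clg) 1 ≤
      (sv M (s + 1) / sv AM s) *
        ((sv M 1) ^ 2 / sv Alg s + 2 * sv M 1 + sv M (s + 1)) :=
  stmt8_general m n s M AM hAMdef BM hBMdef FM hFMdef U hU V hV hSVD Mlg hMlg Alg hAlg Clg hClg hAM
    hAlgUnit
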